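/- arXiv:1102.3491 — 3 statements merged into one kernel-verified Lean document; each statement's English description precedes it below -/
import Mathlib

section
/- Let M be a strongly base orderable matroid. Then for every pair of bases I and J of M there exists a bijection π : I → J such that π(x) = x for every x ∈ I ∩ J and such that for every K ⊆ I, the set π(K) ∪ (I \ K) is a base of M. -/
/-- A matroid is strongly base orderable if for every pair of bases `I`, `J` there is a
bijection `π : I → J` such that for every `K ⊆ I`, the set `π(K) ∪ (I \ K)` is a base. -/
def Matroid.StronglyBaseOrderable {α : Type*} (M : Matroid α) : Prop :=
  ∀ I J : Set α, M.IsBase I → M.IsBase J →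
    ∃ π : α → α, Set.BijOn π I J ∧ ∀ K ⊆ I, M.IsBase (π '' K ∪ (I \ K))

variable {α : Type*}

/-!
Take the bijection `π : I → J` given by strong base orderability. Exchanging a single `x ∈ I`
already forces `π x ∉ I` unless `π x = x`, since otherwise the exchanged set would be the proper
subset `I \ {x}` of the base `I`. Hence `π` maps `I \ J` into `J \ I`, and exchanging all of
`I \ J` at once yields a base inside `J`, so `π` maps `I \ J` onto `J \ I`. Redefining `π` to be
the identity on `I ∩ J` therefore keeps it a bijection, and every exchange it performs is an
exchange of `π` on `K \ J`.
-/

theorem Set.BijOn.union_of_disjoint {β γ : Type*} {f : β → γ} {s₁ s₂ : Set β} {t₁ t₂ : Set γ}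
    (h₁ : BijOn f s₁ t₁) (h₂ : BijOn f s₂ t₂) (ht : Disjoint t₁ t₂) :
    BijOn f (s₁ ∪ s₂) (t₁ ∪ t₂) := by
  have hs : Disjoint s₁ s₂ := Set.disjoint_left.2 fun x hx₁ hx₂ =>
    Set.disjoint_left.1 ht (h₁.mapsTo hx₁) (h₂.mapsTo hx₂)
  refine h₁.union h₂ ((Set.injOn_union hs).2 ⟨h₁.injOn, h₂.injOn, ?_⟩)
  rintro x hx y hy hxy
  exact Set.disjoint_left.1 ht (h₁.mapsTo hx) (hxy ▸ h₂.mapsTo hy)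

namespace Matroid

variable {M : Matroid α} {I J : Set α} {π : α → α}

def IsStrongExchangeMap (M : Matroid α) (I J : Set α) (π : α → α) : Prop :=
  Set.BijOn π I J ∧ ∀ K ⊆ I, M.IsBase (π '' K ∪ (I \ K))

namespace IsStrongExchangeMap

theorem isBase_left (h : M.IsStrongExchangeMap I J π) : M.IsBase I := by
  simpa using h.2 ∅ (Set.empty_subset I)

theorem isBase_right (h : M.IsStrongExchangeMap I J π) : M.IsBase J := by
  simpa [h.1.image_eq] using h.2 I subset_rfl

theorem apply_eq_of_apply_mem (h : M.IsStrongExchangeMap I J π) {x : α} (hx : x ∈ I)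
    (hπx : π x ∈ I) : π x = x := by
  have hbase := h.2 {x} (Set.singleton_subset_iff.2 hx)
  have hsub : π '' {x} ∪ (I \ {x}) ⊆ I := by
    simpa [Set.image_singleton, Set.insert_subset_iff] using hπx
  have hx' : x ∈ π '' {x} ∪ (I \ {x}) := by
    rw [hbase.eq_of_subset_isBase h.isBase_left hsub]
    exact hx
  simpa [eq_comm] using hx'

theorem mapsTo_sdiff (h : M.IsStrongExchangeMap I J π) : Set.MapsTo π (I \ J) (J \ I) :=
  fun _ hx =>
    ⟨h.1.mapsTo hx.1, fun hπx => hx.2 (h.apply_eq_of_apply_mem hx.1 hπx ▸ h.1.mapsTo hx.1)⟩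

theorem image_sdiff (h : M.IsStrongExchangeMap I J π) : π '' (I \ J) = J \ I := by
  refine h.mapsTo_sdiff.image_subset.antisymm fun y hy => ?_
  have hbase : M.IsBase (π '' (I \ J) ∪ (I ∩ J)) := by
    simpa [Set.sdiff_sdiff_right_self] using h.2 (I \ J) Set.sdiff_subset
  have hsub : π '' (I \ J) ∪ (I ∩ J) ⊆ J :=
    Set.union_subset (h.1.image_eq ▸ Set.image_mono Set.sdiff_subset) Set.inter_subset_right
  have hy' : y ∈ π '' (I \ J) ∪ (I ∩ J) := by
    rw [hbase.eq_of_subset_isBase h.isBase_right hsub]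
    exact hy.1
  exact hy'.resolve_right fun hyI => hy.2 hyI.1

theorem bijOn_sdiff (h : M.IsStrongExchangeMap I J π) : Set.BijOn π (I \ J) (J \ I) :=
  h.image_sdiff ▸ (h.1.injOn.mono Set.sdiff_subset).bijOn_image

theorem piecewise_id [DecidablePred (· ∈ I ∩ J)] (h : M.IsStrongExchangeMap I J π) :
    M.IsStrongExchangeMap I J ((I ∩ J).piecewise id π) := by
  set π' := (I ∩ J).piecewise id π
  have hid : Set.EqOn π' id (I ∩ J) := Set.piecewise_eqOn _ _ _
  have hπ : Set.EqOn π' π (I \ J) := fun _ hx =>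
    Set.piecewise_eq_of_notMem _ _ _ fun hx' => hx.2 hx'.2
  refine ⟨?_, fun K hK => ?_⟩
  · have hbij := ((Set.bijOn_id _).congr hid.symm).union_of_disjoint (h.bijOn_sdiff.congr hπ.symm)
      (Set.disjoint_left.2 fun x hx hx' => hx'.2 hx.1)
    rwa [Set.inter_union_sdiff, Set.inter_comm, Set.inter_union_sdiff] at hbij
  · have himage : π' '' K = K ∩ J ∪ π '' (K \ J) := by
      rw [← Set.inter_union_sdiff K J, Set.image_union, Set.inter_union_sdiff,
        (hid.mono (Set.inter_subset_inter_left J hK)).image_eq_self,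
        (hπ.mono (Set.sdiff_subset_sdiff_left hK)).image_eq]
    have hrest : K ∩ J ∪ (I \ K) = I \ (K \ J) := by
      ext x
      simp only [Set.mem_union, Set.mem_inter_iff, Set.mem_sdiff]
      have := @hK x
      tauto
    rw [himage, Set.union_comm (K ∩ J), Set.union_assoc, hrest]
    exact h.2 (K \ J) (Set.sdiff_subset.trans hK)

end IsStrongExchangeMap

end Matroid

theorem stronglyBaseOrderable_exists_id_on_inter
    (M : Matroid α) (hsbo : M.StronglyBaseOrderable)
    (I J : Set α) (hI : M.IsBase I) (hJ : M.IsBase J) :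
    ∃ π : α → α, Set.BijOn π I J ∧ (∀ x ∈ I ∩ J, π x = x) ∧
      ∀ K ⊆ I, M.IsBase (π '' K ∪ (I \ K)) := by
  classical
  obtain ⟨π, hπ⟩ := hsbo I J hI hJ
  have hπ' := (show M.IsStrongExchangeMap I J π from hπ).piecewise_id
  exact ⟨_, hπ'.1, fun x hx => Set.piecewise_eq_of_mem _ _ _ hx, hπ'.2⟩
end

section
/- Let M be a strongly base orderable matroid on ground set S, let e ∈ S, and let f ∉ S. Let N be a matroid on ground set S ∪ {f} whose independent sets are exactly: the sets I ⊆ S that are independent in M, together with the sets I ⊆ S ∪ {f} with f ∈ I and e ∉ I such that (I \ {f}) ∪ {e} is independent in M. Then N is strongly base orderable. (That is, strong base orderability is closed under parallel extensions.) -/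
variable {α : Type*}

/-!
Let `σ` be the transposition of `e` and `f`. As `f` is parallel to `e`, `σ` is an automorphism
of `N`, and the bases of `N` are the sets `τ '' B` with `B` a base of `M` and `τ ∈ {1, σ}`.
Write bases of `N` as `I = τ '' I'` and `J = υ '' J'`, and take an exchange bijection `π'` of `M`
from `I'` to `J'` that fixes `e` whenever `e ∈ I' ∩ J'` (precompose with a transposition of
`I'`). Then `υ ∘ π' ∘ τ` is an exchange bijection of `N`: for `K ⊆ I` it produces
`υ '' A ∪ τ '' C` with `A ∪ C` a base of `M` and `e ∉ A ∩ C`, so the set is the image of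
`A ∪ C` under `τ` or under `υ`.
-/

open Set Equiv

theorem Equiv.image_swap_eq_self [DecidableEq α] {a b : α} {s : Set α} (h : a ∈ s ↔ b ∈ s) :
    swap a b '' s = s := by
  ext x
  rw [mem_image_equiv, symm_swap, swap_apply_def]
  split_ifs with hxa hxb <;> subst_vars <;> tauto

theorem Equiv.swap_image_swap_image [DecidableEq α] (a b : α) (s : Set α) :
    swap a b '' (swap a b '' s) = s := by
  simp [image_image]

theorem Equiv.image_swap_eq_sdiff_union [DecidableEq α] {a b : α} {s : Set α} (ha : a ∉ s)
    (hb : b ∈ s) :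
    swap a b '' s = s \ {b} ∪ {a} := by
  rw [swap_comm, image_swap_of_mem_of_notMem hb ha, union_singleton,
    insert_sdiff_of_notMem _ (by rintro rfl; exact ha hb)]

theorem Set.image_insert_union_sdiff_insert {π : α → α} {I : Set α} {x : α} (hxI : x ∈ I)
    (hπx : π x = x) (K : Set α) :
    π '' insert x K ∪ (I \ insert x K) = π '' K ∪ (I \ K) := by
  rw [image_insert_eq, hπx]
  have : x ∈ π '' K ∨ x ∉ K := (em (x ∈ K)).imp (fun h => ⟨x, h, hπx⟩) id
  ext y
  simp only [mem_union, mem_insert_iff, mem_sdiff]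
  by_cases hy : y = x
  · subst hy; tauto
  · tauto

section PermPair

variable [DecidableEq α] {e f : α} {τ τ₁ τ₂ : Perm α}

theorem image_image_of_mem_pair (hτ : τ ∈ ({1, swap e f} : Set (Perm α))) (X : Set α) :
    τ '' (τ '' X) = X := by
  rcases hτ with rfl | rfl
  · simp
  · exact swap_image_swap_image e f X

theorem bijOn_image_of_mem_pair (hτ : τ ∈ ({1, swap e f} : Set (Perm α))) (X : Set α) :
    BijOn τ (τ '' X) X := by
  have h := τ.bijOn_image (s := τ '' X)
  rwa [image_image_of_mem_pair hτ X] at h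

theorem apply_eq_self_of_mem_pair (hτ : τ ∈ ({1, swap e f} : Set (Perm α))) {x : α}
    (hxe : x ≠ e) (hxf : x ≠ f) : τ x = x := by
  rcases hτ with rfl | rfl
  · rfl
  · exact swap_apply_of_ne_of_ne hxe hxf

theorem exists_mem_pair_image_union_image_eq (hτ₁ : τ₁ ∈ ({1, swap e f} : Set (Perm α)))
    (hτ₂ : τ₂ ∈ ({1, swap e f} : Set (Perm α))) {A C : Set α} (hf : f ∉ A ∪ C)
    (he : e ∉ A ∩ C) :
    ∃ τ ∈ ({1, swap e f} : Set (Perm α)), τ₁ '' A ∪ τ₂ '' C = τ '' (A ∪ C) := by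
  have hfix : ∀ ⦃x⦄, x ∈ A ∪ C → x ≠ e → τ₁ x = τ₂ x := fun x hx hxe => by
    have hxf : x ≠ f := fun h => hf (h ▸ hx)
    rw [apply_eq_self_of_mem_pair hτ₁ hxe hxf, apply_eq_self_of_mem_pair hτ₂ hxe hxf]
  by_cases heA : e ∈ A
  · refine ⟨τ₁, hτ₁, ?_⟩
    rw [image_union, EqOn.image_eq fun x hx => (hfix (.inr hx) ?_).symm]
    rintro rfl
    exact he ⟨heA, hx⟩
  · refine ⟨τ₂, hτ₂, ?_⟩
    rw [image_union, EqOn.image_eq fun x hx => hfix (.inl hx) ?_]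
    rintro rfl
    exact heA hx

end PermPair

namespace Matroid

variable {M N : Matroid α} {B X : Set α}

theorem IsBase.perm_image {σ : Perm α} (hσ : ∀ I, N.Indep (σ '' I) ↔ N.Indep I)
    (hB : N.IsBase B) : N.IsBase (σ '' B) := by
  refine ((hσ B).2 hB.indep).isBase_of_maximal fun J hJ hBJ => ?_
  have hJ' : N.Indep (σ.symm '' J) := (hσ _).1 (by rwa [image_symm_image])
  rw [hB.eq_of_subset_indep hJ' ((σ.subset_symm_image _ _).2 hBJ), image_symm_image]

theorem StronglyBaseOrderable.exists_bijOn_fixing (hM : M.StronglyBaseOrderable)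
    {I J : Set α} (hI : M.IsBase I) (hJ : M.IsBase J) (e : α) :
    ∃ π : α → α, BijOn π I J ∧ (∀ K ⊆ I, M.IsBase (π '' K ∪ (I \ K))) ∧
      (e ∈ I → e ∈ J → π e = e) := by
  classical
  obtain ⟨π, hπ, hπK⟩ := hM I J hI hJ
  by_cases heIJ : e ∈ I ∧ e ∈ J
  swap
  · exact ⟨π, hπ, hπK, fun heI heJ => (heIJ ⟨heI, heJ⟩).elim⟩
  obtain ⟨heI, heJ⟩ := heIJ
  obtain ⟨a, haI, hae⟩ := hπ.surjOn heJ
  have hπ₁e : (π ∘ swap e a) e = e := by simp [hae]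
  have hswap : BijOn (swap e a) I I := by
    simpa only [image_swap_eq_self (iff_of_true heI haI)] using
      (swap e a).injective.injOn.bijOn_image (s := I)
  refine ⟨π ∘ swap e a, hπ.comp hswap, fun K hK => ?_, fun _ _ => hπ₁e⟩
  -- Adding the fixed point `e` to `K` does not change the set; afterwards the transposition
  -- fixes `insert e K` if `a ∈ K`, and fixes `K \ {e}` (which gives the same set again) if not.
  rw [← image_insert_union_sdiff_insert heI hπ₁e, image_comp]
  by_cases haK : a ∈ K
  · rw [image_swap_eq_self (iff_of_true (mem_insert e K) (mem_insert_of_mem e haK))]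
    exact hπK _ (insert_subset heI hK)
  · rw [← insert_sdiff_singleton, ← image_comp, image_insert_union_sdiff_insert heI hπ₁e,
      image_comp, image_swap_eq_self (iff_of_false (fun h => h.2 rfl) fun h => haK h.1)]
    exact hπK _ (sdiff_subset.trans hK)

section ParallelExtension

variable [DecidableEq α] {e f : α}

theorem indep_iff_swap_image (hf : f ∉ M.E)
    (hN : ∀ I, N.Indep I ↔ (I ⊆ M.E ∧ M.Indep I) ∨
      (I ⊆ M.E ∪ {f} ∧ f ∈ I ∧ e ∉ I ∧ M.Indep (I \ {f} ∪ {e})))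
    (I : Set α) : N.Indep I ↔ (f ∉ I ∧ M.Indep I) ∨ (e ∉ I ∧ M.Indep (swap e f '' I)) := by
  rw [hN]
  constructor
  · rintro (⟨hIE, hI⟩ | ⟨-, hfI, heI, hI⟩)
    · exact .inl ⟨fun h => hf (hIE h), hI⟩
    · exact .inr ⟨heI, by rwa [image_swap_eq_sdiff_union heI hfI]⟩
  · rintro (⟨-, hI⟩ | ⟨heI, hI⟩)
    · exact .inl ⟨hI.subset_ground, hI⟩
    by_cases hfI : f ∈ I
    · rw [image_swap_eq_sdiff_union heI hfI] at hI
      have hIf : I \ {f} ⊆ M.E := subset_union_left.trans hI.subset_ground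
      rw [sdiff_subset_iff, union_comm] at hIf
      exact .inr ⟨hIf, hfI, heI, hI⟩
    · rw [image_swap_eq_self (iff_of_false heI hfI)] at hI
      exact .inl ⟨hI.subset_ground, hI⟩

theorem indep_iff_of_notMem
    (hN : ∀ I, N.Indep I ↔ (f ∉ I ∧ M.Indep I) ∨ (e ∉ I ∧ M.Indep (swap e f '' I)))
    (hfI : f ∉ I) : N.Indep I ↔ M.Indep I := by
  rw [hN]
  refine ⟨?_, fun h => .inl ⟨hfI, h⟩⟩
  rintro (⟨-, h⟩ | ⟨heI, h⟩)
  · exact h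
  · rwa [image_swap_eq_self (iff_of_false heI hfI)] at h

theorem indep_swap_image_iff
    (hN : ∀ I, N.Indep I ↔ (f ∉ I ∧ M.Indep I) ∨ (e ∉ I ∧ M.Indep (swap e f '' I)))
    (I : Set α) : N.Indep (swap e f '' I) ↔ N.Indep I := by
  simp only [hN, mem_image_equiv, symm_swap, swap_apply_left, swap_apply_right,
    swap_image_swap_image]
  exact or_comm

theorem isBase_of_isBase (hf : f ∉ M.E)
    (hN : ∀ I, N.Indep I ↔ (f ∉ I ∧ M.Indep I) ∨ (e ∉ I ∧ M.Indep (swap e f '' I)))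
    (hB : M.IsBase B) : N.IsBase B := by
  have hfB : f ∉ B := fun h => hf (hB.subset_ground h)
  refine ((indep_iff_of_notMem hN hfB).2 hB.indep).isBase_of_maximal fun J hJ hBJ => ?_
  by_cases hfJ : f ∈ J
  · obtain ⟨heJ, hJM⟩ := ((hN J).1 hJ).resolve_left fun h => h.1 hfJ
    have hBJ' : B ⊆ swap e f '' J := by
      rw [← image_swap_eq_self (iff_of_false (fun h => heJ (hBJ h)) hfB)]
      exact image_mono hBJ
    have heB : e ∈ B := hB.eq_of_subset_indep hJM hBJ' ▸ ⟨f, hfJ, swap_apply_right e f⟩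
    exact absurd (hBJ heB) heJ
  · exact hB.eq_of_subset_indep ((indep_iff_of_notMem hN hfJ).1 hJ) hBJ

theorem isBase_of_isBase_of_notMem (hf : f ∉ M.E)
    (hN : ∀ I, N.Indep I ↔ (f ∉ I ∧ M.Indep I) ∨ (e ∉ I ∧ M.Indep (swap e f '' I)))
    (hB : N.IsBase B) (hfB : f ∉ B) : M.IsBase B :=
  ((indep_iff_of_notMem hN hfB).1 hB.indep).isBase_of_maximal fun _ hJ hBJ =>
    hB.eq_of_subset_indep ((indep_iff_of_notMem hN fun h => hf (hJ.subset_ground h)).2 hJ) hBJ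

theorem isBase_iff_exists_mem_pair (hf : f ∉ M.E)
    (hN : ∀ I, N.Indep I ↔ (f ∉ I ∧ M.Indep I) ∨ (e ∉ I ∧ M.Indep (swap e f '' I))) :
    N.IsBase X ↔ ∃ τ ∈ ({1, swap e f} : Set (Perm α)), M.IsBase (τ '' X) := by
  constructor
  · intro hX
    by_cases hfX : f ∈ X
    · have heX : e ∉ X := (((hN X).1 hX.indep).resolve_left fun h => h.1 hfX).1
      refine ⟨swap e f, mem_insert_of_mem _ rfl, ?_⟩
      refine isBase_of_isBase_of_notMem hf hN (hX.perm_image (indep_swap_image_iff hN)) ?_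
      simpa using heX
    · exact ⟨1, mem_insert _ _, by simpa using isBase_of_isBase_of_notMem hf hN hX hfX⟩
  · rintro ⟨τ, hτ | hτ, hX⟩ <;> subst hτ
    · simpa using isBase_of_isBase hf hN hX
    · simpa [swap_image_swap_image] using
        (isBase_of_isBase hf hN hX).perm_image (indep_swap_image_iff hN)

end ParallelExtension

end Matroid

theorem stronglyBaseOrderable_parallelExtension_general
    (M : Matroid α) (S : Set α) (hground : M.E = S)
    (hsbo : M.StronglyBaseOrderable)
    (e : α) (f : α) (hf : f ∉ S)
    (N : Matroid α)
    (hNindep : ∀ I : Set α, N.Indep I ↔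
      (I ⊆ S ∧ M.Indep I) ∨
        (I ⊆ S ∪ {f} ∧ f ∈ I ∧ e ∉ I ∧ M.Indep (I \ {f} ∪ {e}))) :
    N.StronglyBaseOrderable := by
  classical
  subst hground
  have hbase (X : Set α) := Matroid.isBase_iff_exists_mem_pair (X := X) hf
    (Matroid.indep_iff_swap_image hf hNindep)
  intro I J hI hJ
  obtain ⟨τI, hτI, hI'⟩ := (hbase I).1 hI
  obtain ⟨τJ, hτJ, hJ'⟩ := (hbase J).1 hJ
  obtain ⟨π, hπ, hπK, hπe⟩ := hsbo.exists_bijOn_fixing hI' hJ' e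
  refine ⟨τJ ∘ π ∘ τI, (bijOn_image_of_mem_pair hτJ J).comp (hπ.comp τI.bijOn_image),
    fun K hK => ?_⟩
  have hK' : τI '' K ⊆ τI '' I := image_mono hK
  have hB := hπK _ hK'
  have hdiff : I \ K = τI '' (τI '' I \ τI '' K) := by
    rw [image_sdiff τI.injective, image_image_of_mem_pair hτI, image_image_of_mem_pair hτI]
  have he : e ∉ π '' (τI '' K) ∩ (τI '' I \ τI '' K) := by
    rintro ⟨⟨x, hx, rfl⟩, hxI, hxK⟩
    have hπx : π x = x := hπ.injOn hxI (hK' hx) (hπe hxI (hπ.mapsTo (hK' hx)))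
    exact hxK (hπx.symm ▸ hx)
  obtain ⟨τ, hτ, heq⟩ := exists_mem_pair_image_union_image_eq hτJ hτI
    (fun h => hf (hB.subset_ground h)) he
  rw [image_comp, image_comp, hdiff, heq]
  exact (hbase _).2 ⟨τ, hτ, by rwa [image_image_of_mem_pair hτ]⟩

theorem stronglyBaseOrderable_parallelExtension
    (M : Matroid α) (S : Set α) (hground : M.E = S)
    (hsbo : M.StronglyBaseOrderable)
    (e : α) (he : e ∈ S) (f : α) (hf : f ∉ S)
    (N : Matroid α) (hNground : N.E = S ∪ {f})
    (hNindep : ∀ I : Set α, N.Indep I ↔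
      (I ⊆ S ∧ M.Indep I) ∨
        (I ⊆ S ∪ {f} ∧ f ∈ I ∧ e ∉ I ∧ M.Indep (I \ {f} ∪ {e}))) :
    N.StronglyBaseOrderable :=
  stronglyBaseOrderable_parallelExtension_general M S hground hsbo e f hf N hNindep
end

section
/- Let M be a strongly base orderable matroid on ground set S and let k be a nonnegative integer. Let N be a matroid on ground set S whose independent sets are exactly the sets I ⊆ S that are independent in M and satisfy |I| ≤ k. Then N is strongly base orderable. (That is, strong base orderability is closed under truncation.) -/
variable {α : Type*}

open Set

theorem Set.Finite.exists_bijOn_eqOn_id_inter {s t : Set α} (hs : s.Finite)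
    (h : s.encard = t.encard) : ∃ e : α → α, BijOn e s t ∧ EqOn e id (s ∩ t) := by
  classical
  have hdiff : (s \ t).encard = (t \ s).encard := by
    have hinter : (s ∩ t).encard ≠ ⊤ := (hs.subset inter_subset_left).encard_lt_top.ne
    have hsum : (s \ t).encard + (s ∩ t).encard = (t \ s).encard + (t ∩ s).encard := by
      rw [encard_sdiff_add_encard_inter, encard_sdiff_add_encard_inter, h]
    exact WithTop.add_right_cancel hinter (inter_comm s t ▸ hsum)
  obtain ⟨f, hf⟩ : ∃ f : α → α, BijOn f (s \ t) (t \ s) := by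
    obtain hst | ⟨x, -⟩ := (s \ t).eq_empty_or_nonempty
    · rw [hst, encard_empty, eq_comm, encard_eq_zero] at hdiff
      exact ⟨id, by rw [hst, hdiff]; exact bijOn_empty id⟩
    · have : Nonempty α := ⟨x⟩
      exact hs.sdiff.exists_bijOn_of_encard_eq hdiff
  have hid : EqOn id (t.piecewise id f) (s ∩ t) :=
    ((piecewise_eqOn t id f).mono inter_subset_right).symm
  have he₁ : BijOn (t.piecewise id f) (s \ t) (t \ s) :=
    hf.congr fun x hx ↦ (piecewise_eq_of_notMem _ _ _ hx.2).symm
  have he₂ : BijOn (t.piecewise id f) (s ∩ t) (s ∩ t) := (bijOn_id _).congr hid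
  have hinj : InjOn (t.piecewise id f) (s \ t ∪ s ∩ t) := by
    refine (injOn_union disjoint_sdiff_inter).2 ⟨he₁.injOn, he₂.injOn, ?_⟩
    rintro x hx y hy hxy
    exact (he₁.mapsTo hx).2 (hxy ▸ (he₂.mapsTo hy).1)
  refine ⟨t.piecewise id f, ?_, hid.symm⟩
  have := he₁.union he₂ hinj
  rwa [sdiff_union_inter, inter_comm, sdiff_union_inter] at this

namespace Matroid

variable {M : Matroid α} {B I J : Set α} {π : α → α}

theorem IsBase.apply_eq_self_of_apply_mem (hB : M.IsBase B)
    (hπ : ∀ K ⊆ B, M.IsBase (π '' K ∪ (B \ K))) {x : α} (hx : x ∈ B) (hπx : π x ∈ B) :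
    π x = x := by
  by_contra hne
  have hexchange := hπ {x} (singleton_subset_iff.2 hx)
  rw [image_singleton, singleton_union,
    insert_eq_of_mem (show π x ∈ B \ {x} from ⟨hπx, hne⟩)] at hexchange
  have hxB : x ∈ B \ {x} := (hexchange.eq_of_subset_isBase hB sdiff_subset).symm ▸ hx
  exact hxB.2 rfl

theorem StronglyBaseOrderable.exists_bijOn_indep (hM : M.StronglyBaseOrderable)
    (hI : M.Indep I) (hJ : M.Indep J) (hIfin : I.Finite) (hIJ : I.encard = J.encard) :
    ∃ σ : α → α, BijOn σ I J ∧
      ∀ K ⊆ I, M.Indep (σ '' K ∪ (I \ K)) ∧ (σ '' K ∪ (I \ K)).encard = I.encard := by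
  obtain ⟨B₁, hB₁, hIB₁⟩ := hI.exists_isBase_superset
  obtain ⟨B₂, hB₂, hJB₂⟩ := hJ.exists_isBase_superset
  obtain ⟨π, hπ, hπK⟩ := hM B₁ B₂ hB₁ hB₂
  have hP : BijOn π (B₁ ∩ π ⁻¹' J) J := hπ.subset_right hJB₂
  have hIP : I.encard = (B₁ ∩ π ⁻¹' J).encard := by
    rw [hIJ, ← hP.injOn.encard_image, hP.image_eq]
  obtain ⟨e, he, heI⟩ := hIfin.exists_bijOn_eqOn_id_inter hIP
  refine ⟨π ∘ e, hP.comp he, fun K hK ↦ ?_⟩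
  have heK : e '' K ⊆ B₁ := image_subset_iff.2 fun y hy ↦ (he.mapsTo (hK hy)).1
  have hdisj : Disjoint (e '' K) (I \ K) := by
    refine disjoint_left.2 ?_
    rintro _ ⟨y, hy, rfl⟩ ⟨heyI, heyK⟩
    have hfix : e (e y) = e y := heI ⟨heyI, he.mapsTo (hK hy)⟩
    exact heyK (by rwa [he.injOn heyI (hK hy) hfix])
  have hdisj' : Disjoint (π '' (e '' K)) (I \ K) := by
    refine disjoint_left.2 ?_
    rintro _ ⟨z, hz, rfl⟩ hπz
    rw [hB₁.apply_eq_self_of_apply_mem hπK (heK hz) (hIB₁ hπz.1)] at hπz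
    exact disjoint_left.1 hdisj hz hπz
  rw [image_comp]
  refine ⟨(hπK _ heK).indep.subset (union_subset_union_right _ ?_), ?_⟩
  · exact subset_sdiff.2 ⟨sdiff_subset.trans hIB₁, hdisj.symm⟩
  · rw [encard_union_eq hdisj', ← image_comp, ((hP.comp he).injOn.mono hK).encard_image,
      add_comm, encard_sdiff_add_encard_of_subset hK]

end Matroid

theorem stronglyBaseOrderable_truncation_general
    (M : Matroid α)
    (hsbo : M.StronglyBaseOrderable)
    (k : ℕ)
    (N : Matroid α)
    (hNindep : ∀ I : Set α, N.Indep I ↔ M.Indep I ∧ I.encard ≤ k) :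
    N.StronglyBaseOrderable := by
  intro I J hI hJ
  obtain ⟨hMI, hIk⟩ := (hNindep I).1 hI.indep
  have hIfin : I.Finite := finite_of_encard_le_coe hIk
  obtain ⟨σ, hσ, hσK⟩ := hsbo.exists_bijOn_indep hMI ((hNindep J).1 hJ.indep).1 hIfin
    (hI.encard_eq_encard_of_isBase hJ)
  refine ⟨σ, hσ, fun K hK ↦ ?_⟩
  obtain ⟨hMX, hXcard⟩ := hσK K hK
  have hNX : N.Indep (σ '' K ∪ (I \ K)) := (hNindep _).2 ⟨hMX, hXcard ▸ hIk⟩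
  exact hNX.isBase_of_eRk_ge (finite_of_encard_le_coe (hXcard ▸ hIk))
    (by rw [hNX.eRk_eq_encard, hXcard, hI.encard_eq_eRank])

theorem stronglyBaseOrderable_truncation
    (M : Matroid α) (S : Set α) (hground : M.E = S)
    (hsbo : M.StronglyBaseOrderable)
    (k : ℕ)
    (N : Matroid α) (hNground : N.E = S)
    (hNindep : ∀ I : Set α, N.Indep I ↔ M.Indep I ∧ I.encard ≤ k) :
    N.StronglyBaseOrderable :=
  stronglyBaseOrderable_truncation_general M hsbo k N hNindep
end
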